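/- Fix k ≥ 2. Let L : C[0,π] → C[0,π] be a continuous linear operator with L(C₀[0,π]) ⊆ C₀[0,π], and let η ∈ SO(k+1). If η(1^k) = 1^k, then T_η ∘ L^# ∘ T_{η^{-1}} = L^# as operators on C(S^k); if η(1^k) = −1^k, then T_η ∘ L^# ∘ T_{η^{-1}} = ρ^# ∘ L^# ∘ ρ^# as operators on C(S^k). -/

import Mathlib

open MeasureTheory Matrix Metric Real
open scoped RealInnerProductSpace ENNReal
noncomputable section

abbrev Eucl (d : ℕ) : Type := EuclideanSpace ℝ (Fin d)
abbrev Sph (d : ℕ) := Metric.sphere (0 : Eucl d) 1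

/-- The north pole `1^k = (0,…,0,1)` of the sphere `S^k ⊆ ℝ^{k+1}`. -/
def npole (m : ℕ) : Sph (m + 1) :=
  ⟨EuclideanSpace.single (Fin.last m) (1 : ℝ), by simp⟩

/-- The south pole `-1^k = (0,…,0,-1)`. -/
def spole (m : ℕ) : Sph (m + 1) :=
  ⟨EuclideanSpace.single (Fin.last m) (-1 : ℝ), by simp⟩

lemma sphere_sum_sq {d : ℕ} (y : Sph d) : ∑ i : Fin d, (y.1 i) ^ 2 = 1 := by
  have hy : ‖y.1‖ = 1 := by simpa using y.2
  rw [EuclideanSpace.norm_eq] at hy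
  have h' : Real.sqrt (∑ i, ‖y.1 i‖ ^ 2) ^ 2 = 1 := by rw [hy]; norm_num
  rw [Real.sq_sqrt (by positivity)] at h'
  simpa [Real.norm_eq_abs, sq_abs] using h'

lemma phi_mem {m : ℕ} (t : ℝ) (y : Sph (m + 1)) :
    (WithLp.equiv 2 (Fin (m + 2) → ℝ)).symm
      (Fin.snoc (fun i => Real.sin t * ((WithLp.equiv 2 (Fin (m + 1) → ℝ)) y.1) i) (Real.cos t))
      ∈ Metric.sphere (0 : Eucl (m + 2)) 1 := by
  rw [mem_sphere_iff_norm, sub_zero, EuclideanSpace.norm_eq]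
  have hw : (∑ i : Fin (m + 2),
      ‖(WithLp.equiv 2 (Fin (m + 2) → ℝ)).symm
        (Fin.snoc (fun i => Real.sin t * ((WithLp.equiv 2 (Fin (m + 1) → ℝ)) y.1) i)
          (Real.cos t)) i‖ ^ 2) = 1 := by
    simp only [WithLp.equiv_symm_apply, PiLp.toLp_apply, Real.norm_eq_abs, sq_abs]
    rw [Fin.sum_univ_castSucc]
    simp only [Fin.snoc_castSucc, Fin.snoc_last]
    have hmul : (∑ i : Fin (m + 1),
        (Real.sin t * ((WithLp.equiv 2 (Fin (m + 1) → ℝ)) y.1) i) ^ 2)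
        = Real.sin t ^ 2 * ∑ i : Fin (m + 1), (y.1 i) ^ 2 := by
      rw [Finset.mul_sum]
      refine Finset.sum_congr rfl fun i _ => ?_
      have : ((WithLp.equiv 2 (Fin (m + 1) → ℝ)) y.1) i = y.1 i := rfl
      rw [this]; ring
    rw [hmul, sphere_sum_sq, mul_one]
    exact Real.sin_sq_add_cos_sq t
  rw [hw]
  exact Real.sqrt_one

/-- The map `Φ_k(t, y) = (y sin t, cos t)` from `ℝ × S^{k-1}` to `S^k`. -/
def phi {m : ℕ} (t : ℝ) (y : Sph (m + 1)) : Sph (m + 2) :=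
  ⟨(WithLp.equiv 2 (Fin (m + 2) → ℝ)).symm
      (Fin.snoc (fun i => Real.sin t * ((WithLp.equiv 2 (Fin (m + 1) → ℝ)) y.1) i) (Real.cos t)),
    phi_mem t y⟩

/-- The latitude `t ∈ [0,π]` of a point on `S^k`, i.e. `arccos` of the last coordinate. -/
def lat {m : ℕ} (ξ : Sph (m + 2)) : ℝ := Real.arccos (ξ.1 (Fin.last (m + 1)))

lemma lat_mem_Icc {m : ℕ} (ξ : Sph (m + 2)) : lat ξ ∈ Set.Icc (0 : ℝ) π :=
  ⟨Real.arccos_nonneg _, Real.arccos_le_pi _⟩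

/-- The "equatorial part" of a point of `S^k`: its first `k` coordinates. -/
def eqpart {m : ℕ} (ξ : Sph (m + 2)) : Eucl (m + 1) :=
  (WithLp.equiv 2 (Fin (m + 1) → ℝ)).symm (fun i => ξ.1 i.castSucc)

open scoped Classical in
/-- The longitudinal direction of a point of `S^k`, an element of `S^{k-1}`; at the poles it is
(by convention) the north pole `1^{k-1}` of `S^{k-1}`. -/
def ydir {m : ℕ} (ξ : Sph (m + 2)) : Sph (m + 1) :=
  if h : eqpart ξ = 0 then npole m
  else ⟨‖eqpart ξ‖⁻¹ • eqpart ξ, by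
    rw [mem_sphere_iff_norm, sub_zero, norm_smul, norm_inv, norm_norm,
      inv_mul_cancel₀ (norm_ne_zero_iff.mpr h)]⟩

lemma continuous_phi_left {m : ℕ} (y : Sph (m + 1)) :
    Continuous fun t : ℝ => (phi t y : Sph (m + 2)) := by
  apply Continuous.subtype_mk
  refine (PiLp.continuous_toLp 2 (fun _ : Fin (m + 2) => ℝ)).comp ?_
  apply continuous_pi
  intro j
  refine Fin.lastCases ?_ ?_ j
  · simpa [Fin.snoc_last] using Real.continuous_cos
  · intro i
    simp only [Fin.snoc_castSucc]
    exact Real.continuous_sin.mul continuous_const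

lemma continuous_phi_right {m : ℕ} (t : ℝ) :
    Continuous fun y : Sph (m + 1) => (phi t y : Sph (m + 2)) := by
  apply Continuous.subtype_mk
  refine (PiLp.continuous_toLp 2 (fun _ : Fin (m + 2) => ℝ)).comp ?_
  apply continuous_pi
  intro j
  refine Fin.lastCases ?_ ?_ j
  · simpa [Fin.snoc_last] using continuous_const (y := Real.cos t)
  · intro i
    simp only [Fin.snoc_castSucc]
    exact continuous_const.mul
      ((continuous_apply i).comp ((PiLp.continuous_ofLp 2 (fun _ : Fin (m + 1) => ℝ)).comp
        continuous_subtype_val))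

/-- The interval `[0,π]`. -/
abbrev IccPi : Set ℝ := Set.Icc (0 : ℝ) π

/-- `0` as an element of `[0,π]`. -/
def loPt : IccPi := ⟨0, Set.left_mem_Icc.mpr Real.pi_nonneg⟩

/-- `π` as an element of `[0,π]`. -/
def hiPt : IccPi := ⟨π, Set.right_mem_Icc.mpr Real.pi_nonneg⟩

/-- The slice of a continuous function on `S^k` along the meridian through `y ∈ S^{k-1}`:
`t ↦ f(Φ_k(t,y))` as an element of `C[0,π]`. -/
def merid {m : ℕ} (f : C(Sph (m + 2), ℝ)) (y : Sph (m + 1)) : C(IccPi, ℝ) :=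
  ⟨fun t => f (phi t.1 y), by
    exact f.continuous.comp ((continuous_phi_left y).comp continuous_subtype_val)⟩

/-- The latitudinal operator `L^#` acting on continuous functions on `S^k`. -/
def latOp {m : ℕ} (L : C(IccPi, ℝ) →L[ℝ] C(IccPi, ℝ)) (f : C(Sph (m + 2), ℝ))
    (ξ : Sph (m + 2)) : ℝ :=
  L (merid f (ydir ξ)) ⟨lat ξ, lat_mem_Icc ξ⟩

/-- The reflection `t ↦ π - t` of `[0,π]`. -/
def reflI : C(IccPi, IccPi) :=
  ⟨fun t => ⟨π - t.1, ⟨by linarith [t.2.2], by linarith [t.2.1]⟩⟩,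
    Continuous.subtype_mk (continuous_const.sub continuous_subtype_val) _⟩

/-- The reflection operator `ρ g(t) = g(π - t)` on `C[0,π]`. -/
def reflOp : C(IccPi, ℝ) →L[ℝ] C(IccPi, ℝ) where
  toFun g := g.comp reflI
  map_add' g h := rfl
  map_smul' c g := rfl
  cont := ContinuousMap.continuous_precomp reflI

/-- The reflection of the sphere `S^k` changing the sign of the last coordinate. -/
def reflSph {m : ℕ} (ξ : Sph (m + 2)) : Sph (m + 2) :=
  ⟨(WithLp.equiv 2 (Fin (m + 2) → ℝ)).symm
      (Fin.snoc (fun i => ξ.1 i.castSucc) (-(ξ.1 (Fin.last (m + 1))))), by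
    rw [mem_sphere_iff_norm, sub_zero, EuclideanSpace.norm_eq]
    have hw : (∑ i : Fin (m + 2),
        ‖(WithLp.equiv 2 (Fin (m + 2) → ℝ)).symm
          (Fin.snoc (fun i => ξ.1 i.castSucc) (-(ξ.1 (Fin.last (m + 1))))) i‖ ^ 2) = 1 := by
      simp only [WithLp.equiv_symm_apply, PiLp.toLp_apply, Real.norm_eq_abs, sq_abs]
      rw [Fin.sum_univ_castSucc]
      simp only [Fin.snoc_castSucc, Fin.snoc_last, neg_sq]
      have h := sphere_sum_sq ξ
      rw [Fin.sum_univ_castSucc] at h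
      exact h
    rw [hw]
    exact Real.sqrt_one⟩

lemma continuous_reflSph {m : ℕ} : Continuous (reflSph (m := m)) := by
  apply Continuous.subtype_mk
  refine (PiLp.continuous_toLp 2 (fun _ : Fin (m + 2) => ℝ)).comp ?_
  apply continuous_pi
  intro j
  refine Fin.lastCases ?_ ?_ j
  · simp only [Fin.snoc_last]
    exact ((continuous_apply (Fin.last (m + 1))).comp
      ((PiLp.continuous_ofLp 2 (fun _ : Fin (m + 2) => ℝ)).comp continuous_subtype_val)).neg
  · intro i
    simp only [Fin.snoc_castSucc]
    exact (continuous_apply i.castSucc).comp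
      ((PiLp.continuous_ofLp 2 (fun _ : Fin (m + 2) => ℝ)).comp continuous_subtype_val)

/-- The reflection `ρ^#` as a continuous self-map of `S^k`. -/
def reflSphCM {m : ℕ} : C(Sph (m + 2), Sph (m + 2)) := ⟨reflSph, continuous_reflSph⟩

instance (d : ℕ) : MeasurableSpace (Matrix (Fin d) (Fin d) ℝ) :=
  inferInstanceAs (MeasurableSpace (Fin d → Fin d → ℝ))

/-- The special orthogonal group `SO(d)` as a subgroup of the orthogonal group. -/
def SOsub (d : ℕ) : Subgroup ↥(Matrix.orthogonalGroup (Fin d) ℝ) where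
  carrier := {A | Matrix.det (A : Matrix (Fin d) (Fin d) ℝ) = 1}
  one_mem' := by simp
  mul_mem' := by
    intro a b ha hb
    simp only [Set.mem_setOf_eq] at *
    rw [Matrix.UnitaryGroup.mul_val, Matrix.det_mul, ha, hb, mul_one]
  inv_mem' := by
    intro a ha
    simp only [Set.mem_setOf_eq] at *
    rw [Matrix.UnitaryGroup.inv_val, Matrix.star_eq_conjTranspose,
      show ((a : Matrix (Fin d) (Fin d) ℝ))ᴴ = (a : Matrix (Fin d) (Fin d) ℝ)ᵀ from rfl,
      Matrix.det_transpose, ha]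

/-- The special orthogonal group `SO(d)`. -/
abbrev SOg (d : ℕ) := ↥(SOsub d)

/-- The matrix of an element of `SO(d)`. -/
abbrev SOg.mat {d : ℕ} (b : SOg d) : Matrix (Fin d) (Fin d) ℝ :=
  ((b : ↥(Matrix.orthogonalGroup (Fin d) ℝ)) : Matrix (Fin d) (Fin d) ℝ)

lemma SOg.matT_mul {d : ℕ} (b : SOg d) : b.matᵀ * b.mat = 1 := by
  have h := (b : ↥(Matrix.orthogonalGroup (Fin d) ℝ)).2.1
  simpa [Matrix.star_eq_conjTranspose] using h

lemma mulVec_mem_sphere {d : ℕ} (b : SOg d) (x : Sph d) :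
    (WithLp.equiv 2 (Fin d → ℝ)).symm (b.mat.mulVec ((WithLp.equiv 2 (Fin d → ℝ)) x.1)) ∈
      Metric.sphere (0 : Eucl d) 1 := by
  have hx : ‖x.1‖ = 1 := by simpa using x.2
  rw [mem_sphere_iff_norm, sub_zero]
  have key : ∀ w : Eucl d,
      ‖w‖ ^ 2 = (WithLp.equiv 2 (Fin d → ℝ)) w ⬝ᵥ (WithLp.equiv 2 (Fin d → ℝ)) w := by
    intro w
    rw [EuclideanSpace.norm_eq, Real.sq_sqrt (by positivity)]
    simp [dotProduct, sq_abs, pow_two]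
  set v : Fin d → ℝ := (WithLp.equiv 2 (Fin d → ℝ)) x.1 with hv
  have hdot : (b.mat.mulVec v) ⬝ᵥ (b.mat.mulVec v) = v ⬝ᵥ v := by
    rw [Matrix.dotProduct_mulVec, ← Matrix.mulVec_transpose, Matrix.mulVec_mulVec, SOg.matT_mul,
      Matrix.one_mulVec]
  have h1 : ‖(WithLp.equiv 2 (Fin d → ℝ)).symm (b.mat.mulVec v)‖ ^ 2 = (1 : ℝ) := by
    rw [key, Equiv.apply_symm_apply, hdot, ← key, hx, one_pow]
  nlinarith [norm_nonneg ((WithLp.equiv 2 (Fin d → ℝ)).symm (b.mat.mulVec v))]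

/-- The rotation action of `SO(d)` on the sphere `S^{d-1}`. -/
def rot {d : ℕ} (b : SOg d) (x : Sph d) : Sph d :=
  ⟨(WithLp.equiv 2 (Fin d → ℝ)).symm (b.mat.mulVec ((WithLp.equiv 2 (Fin d → ℝ)) x.1)),
    mulVec_mem_sphere b x⟩

lemma continuous_rot {d : ℕ} (b : SOg d) : Continuous (rot b) := by
  apply Continuous.subtype_mk
  refine (PiLp.continuous_toLp 2 (fun _ : Fin d => ℝ)).comp ?_
  have : Continuous fun v : Fin d → ℝ => b.mat.mulVec v :=
    b.mat.mulVecLin.continuous_of_finiteDimensional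
  exact this.comp ((PiLp.continuous_ofLp 2 (fun _ : Fin d => ℝ)).comp continuous_subtype_val)

/-- Rotation as a continuous self-map of the sphere. -/
def rotCM {d : ℕ} (b : SOg d) : C(Sph d, Sph d) := ⟨rot b, continuous_rot b⟩

/-- The rotation operator `T_b f = f ∘ b⁻¹` on continuous functions on the sphere. -/
def Trot {d : ℕ} (b : SOg d) (f : C(Sph d, ℝ)) : C(Sph d, ℝ) := f.comp (rotCM b⁻¹)

/-- The rotation operator `T_b` on `L²` of the sphere. -/
def TrotL2 {d : ℕ} (σ : Measure (Sph d)) (hσ : ∀ b : SOg d, MeasurePreserving (rot b) σ σ)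
    (b : SOg d) : Lp ℝ 2 σ →L[ℝ] Lp ℝ 2 σ :=
  (Lp.compMeasurePreservingₗᵢ ℝ (rot b⁻¹) (hσ b⁻¹)).toContinuousLinearMap

/-- The latitude-`t` circle slice of a continuous function on `S^k`:
`y ↦ f(Φ_k(t,y))` as an element of `C(S^{k-1}, ℝ)`. -/
def ringSlice {m : ℕ} (f : C(Sph (m + 2), ℝ)) (t : ℝ) : C(Sph (m + 1), ℝ) :=
  ⟨fun y => f (phi t y), f.continuous.comp (continuous_phi_right t)⟩

open scoped Classical in
/-- The lifted operator `P̂` acting on functions on `S^k` (with value `0` at the poles,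
and defined via the latitude/longitude decomposition elsewhere). -/
def hatOp {m : ℕ} (P : C(Sph (m + 1), ℝ) →L[ℝ] C(Sph (m + 1), ℝ)) (g : Sph (m + 2) → ℝ)
    (ξ : Sph (m + 2)) : ℝ :=
  if ξ = npole (m + 1) ∨ ξ = spole (m + 1) then 0
  else if h : Continuous g then P (ringSlice ⟨g, h⟩ (lat ξ)) (ydir ξ) else 0

/-- The spherical coordinates `Ψ_n : ℝ^n → S^n` given recursively by `Ψ_1(t) = (sin t, cos t)`
and `Ψ_{n+1}(v, t) = (Ψ_n(v) sin t, cos t)`. -/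
def Psi : (n : ℕ) → (Fin n → ℝ) → Sph (n + 1)
  | 0, _ => npole 0
  | n + 1, v => phi (v (Fin.last n)) (Psi n (fun i => v i.castSucc))

/-- The patch `Ψ_n([a 0, b 0] × ⋯ × [a (n-1), b (n-1)]) ⊆ S^n`. -/
def patchSet (n : ℕ) (a b : Fin n → ℝ) : Set (Sph (n + 1)) :=
  Psi n '' {v | ∀ j, v j ∈ Set.Icc (a j) (b j)}

/-! An `η ∈ SO(k+1)` with `η 1^k = ε 1^k`, `ε = ±1`, is block diagonal `diag(B, ε)` with
`B ∈ O(k)`: it multiplies the last coordinate by `ε` and acts linearly by `B` on the first `k`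
coordinates. Hence `η⁻¹ξ` has the latitude of `ξ` (resp. of `ρ^# ξ`), and `η` carries the
meridian through `ydir (η⁻¹ξ)` onto the meridian through `ydir ξ` (resp. onto its mirror image
under `ρ^#`), so both sides apply `L` to the same slice. At the poles `ydir` is a mere convention
and the slices may differ, but they agree at `0` and `π`; since `L` preserves `C₀[0,π]`, their
images agree at `0` and `π`, which is where they are evaluated. -/

section Coordinates

variable {m : ℕ}

lemma eqpart_apply (ξ : Sph (m + 2)) (i : Fin (m + 1)) : eqpart ξ i = ξ.1 i.castSucc := rfl

lemma Sph.ext_eqpart_last {x y : Sph (m + 2)} (h : eqpart x = eqpart y)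
    (hlast : x.1 (Fin.last (m + 1)) = y.1 (Fin.last (m + 1))) : x = y := by
  refine Subtype.ext (WithLp.ofLp_injective 2 (funext fun j => ?_))
  refine Fin.lastCases hlast (fun i => ?_) j
  simpa only [eqpart_apply] using congrArg (· i) h

lemma eqpart_phi (t : ℝ) (y : Sph (m + 1)) : eqpart (phi t y) = Real.sin t • y.1 := by
  ext i
  simp [eqpart_apply, phi]

lemma phi_apply_last (t : ℝ) (y : Sph (m + 1)) : (phi t y).1 (Fin.last (m + 1)) = Real.cos t := by
  simp [phi]

lemma eqpart_reflSph (ξ : Sph (m + 2)) : eqpart (reflSph ξ) = eqpart ξ := by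
  ext i
  simp [eqpart_apply, reflSph]

lemma reflSph_apply_last (ξ : Sph (m + 2)) :
    (reflSph ξ).1 (Fin.last (m + 1)) = -ξ.1 (Fin.last (m + 1)) := by
  simp [reflSph]

lemma spole_val : (spole m).1 = -(npole m).1 := by
  ext j
  by_cases hj : j = Fin.last m <;> simp [spole, npole, hj]

lemma eqpart_npole : eqpart (npole (m + 1)) = 0 := by
  ext i
  simp [eqpart_apply, npole, (Fin.castSucc_lt_last i).ne]

lemma eqpart_spole : eqpart (spole (m + 1)) = 0 := by
  ext i
  simp [eqpart_apply, spole, (Fin.castSucc_lt_last i).ne]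

lemma npole_apply_last : (npole (m + 1)).1 (Fin.last (m + 1)) = 1 := by
  simp [npole]

lemma spole_apply_last : (spole (m + 1)).1 (Fin.last (m + 1)) = -1 := by
  simp [spole]

lemma phi_zero (y : Sph (m + 1)) : phi 0 y = npole (m + 1) :=
  Sph.ext_eqpart_last (by rw [eqpart_phi, eqpart_npole, Real.sin_zero, zero_smul])
    (by rw [phi_apply_last, npole_apply_last, Real.cos_zero])

lemma phi_pi (y : Sph (m + 1)) : phi π y = spole (m + 1) :=
  Sph.ext_eqpart_last (by rw [eqpart_phi, eqpart_spole, Real.sin_pi, zero_smul])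
    (by rw [phi_apply_last, spole_apply_last, Real.cos_pi])

lemma reflSph_npole : reflSph (npole (m + 1)) = spole (m + 1) :=
  Sph.ext_eqpart_last (by rw [eqpart_reflSph, eqpart_npole, eqpart_spole])
    (by rw [reflSph_apply_last, npole_apply_last, spole_apply_last])

lemma reflSph_spole : reflSph (spole (m + 1)) = npole (m + 1) :=
  Sph.ext_eqpart_last (by rw [eqpart_reflSph, eqpart_npole, eqpart_spole])
    (by rw [reflSph_apply_last, npole_apply_last, spole_apply_last, neg_neg])

lemma norm_eqpart_sq (ξ : Sph (m + 2)) :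
    ‖eqpart ξ‖ ^ 2 = 1 - ξ.1 (Fin.last (m + 1)) ^ 2 := by
  have h := sphere_sum_sq ξ
  rw [Fin.sum_univ_castSucc] at h
  rw [EuclideanSpace.norm_eq, Real.sq_sqrt (by positivity)]
  simp only [eqpart_apply, Real.norm_eq_abs, sq_abs]
  linarith

lemma ydir_val {ξ : Sph (m + 2)} (h : eqpart ξ ≠ 0) : (ydir ξ).1 = ‖eqpart ξ‖⁻¹ • eqpart ξ := by
  simp only [ydir, dif_neg h]

lemma ydir_reflSph (ξ : Sph (m + 2)) : ydir (reflSph ξ) = ydir ξ := by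
  simp only [ydir, eqpart_reflSph]

lemma lat_eq_zero_or_eq_pi_of_eqpart_eq_zero {ξ : Sph (m + 2)} (h : eqpart ξ = 0) :
    lat ξ = 0 ∨ lat ξ = π := by
  have hsq : ξ.1 (Fin.last (m + 1)) ^ 2 = 1 := by
    have := norm_eqpart_sq ξ
    rw [h, norm_zero] at this
    linarith
  rcases sq_eq_one_iff.mp hsq with h1 | h1
  · exact .inl (by rw [lat, h1, Real.arccos_one])
  · exact .inr (by rw [lat, h1, Real.arccos_neg_one])

end Coordinates

section Rotation

variable {d : ℕ}

lemma rot_val (b : SOg d) (x : Sph d) : (rot b x).1 = WithLp.toLp 2 (b.mat *ᵥ x.1.ofLp) := rfl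

lemma SOg.mat_inv (b : SOg d) : (b⁻¹).mat = b.matᵀ := rfl

lemma rot_rot_inv (b : SOg d) (x : Sph d) : rot b (rot b⁻¹ x) = x := by
  refine Subtype.ext (WithLp.ofLp_injective 2 ?_)
  rw [rot_val, rot_val, SOg.mat_inv, mulVec_mulVec, mul_eq_one_comm.mpr (SOg.matT_mul b),
    one_mulVec]

lemma rot_val_of_val_eq_neg (b : SOg d) {x y : Sph d} (h : y.1 = -x.1) :
    (rot b y).1 = -(rot b x).1 := by
  rw [rot_val, rot_val, h, WithLp.ofLp_neg, mulVec_neg, WithLp.toLp_neg]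

end Rotation

section Axis

variable {m : ℕ} {η : SOg (m + 2)} {ε : ℝ}

lemma SOg.mat_apply_last_col (hη : (rot η (npole (m + 1))).1 = ε • (npole (m + 1)).1)
    (i : Fin (m + 2)) : η.mat i (Fin.last (m + 1)) = if i = Fin.last (m + 1) then ε else 0 := by
  have h := congrArg (fun v : Eucl (m + 2) => v i) hη
  simpa [rot_val, npole, mulVec_single_one, Pi.single_apply] using h

lemma SOg.mat_apply_last_row (hη : (rot η (npole (m + 1))).1 = ε • (npole (m + 1)).1)
    (hε : ε * ε = 1) (j : Fin (m + 2)) :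
    η.mat (Fin.last (m + 1)) j = if j = Fin.last (m + 1) then ε else 0 := by
  have h := congrFun (congrFun (SOg.matT_mul η) (Fin.last (m + 1))) j
  rw [mul_apply, Finset.sum_eq_single (Fin.last (m + 1)) (fun i _ hi => by
    rw [transpose_apply, SOg.mat_apply_last_col hη, if_neg hi, zero_mul]) (by simp),
    transpose_apply, SOg.mat_apply_last_col hη, if_pos rfl, one_apply] at h
  calc η.mat (Fin.last (m + 1)) j = ε * (ε * η.mat (Fin.last (m + 1)) j) := by
        rw [← mul_assoc, hε, one_mul]
    _ = _ := by
        rw [h]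
        by_cases hj : j = Fin.last (m + 1)
        · simp [hj]
        · simp [hj, Ne.symm hj]

lemma rot_apply_last (hη : (rot η (npole (m + 1))).1 = ε • (npole (m + 1)).1)
    (hε : ε * ε = 1) (x : Sph (m + 2)) :
    (rot η x).1 (Fin.last (m + 1)) = ε * x.1 (Fin.last (m + 1)) := by
  simp [rot_val, mulVec, dotProduct, SOg.mat_apply_last_row hη hε]

lemma rot_inv_apply_last (hη : (rot η (npole (m + 1))).1 = ε • (npole (m + 1)).1)
    (x : Sph (m + 2)) : (rot η⁻¹ x).1 (Fin.last (m + 1)) = ε * x.1 (Fin.last (m + 1)) := by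
  simp [rot_val, SOg.mat_inv, mulVec, dotProduct, SOg.mat_apply_last_col hη]

lemma eqpart_rot_eq_smul (hη : (rot η (npole (m + 1))).1 = ε • (npole (m + 1)).1)
    {x y : Sph (m + 2)} {c : ℝ} (h : eqpart x = c • eqpart y) :
    eqpart (rot η x) = c • eqpart (rot η y) := by
  have hcoord (z : Sph (m + 2)) (i : Fin (m + 1)) :
      eqpart (rot η z) i = ∑ l, η.mat i.castSucc l.castSucc * eqpart z l := by
    rw [eqpart_apply, rot_val, PiLp.toLp_apply, mulVec, dotProduct, Fin.sum_univ_castSucc,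
      SOg.mat_apply_last_col hη, if_neg (Fin.castSucc_lt_last i).ne, zero_mul, add_zero]
    rfl
  ext i
  simp only [hcoord, h, PiLp.smul_apply, smul_eq_mul, Finset.mul_sum]
  exact Finset.sum_congr rfl fun l _ => by ring

lemma eqpart_rot_phi_ydir_rot_inv
    (hη : (rot η (npole (m + 1))).1 = ε • (npole (m + 1)).1) (hε : ε * ε = 1)
    {ξ : Sph (m + 2)} (hne : eqpart ξ ≠ 0) (t : ℝ) :
    eqpart (rot η (phi t (ydir (rot η⁻¹ ξ)))) = eqpart (phi t (ydir ξ)) := by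
  set ζ := rot η⁻¹ ξ
  have hnorm : ‖eqpart ζ‖ = ‖eqpart ξ‖ := by
    refine (pow_left_inj₀ (norm_nonneg _) (norm_nonneg _) two_ne_zero).mp ?_
    rw [norm_eqpart_sq, norm_eqpart_sq, rot_inv_apply_last hη, mul_pow, sq ε, hε, one_mul]
  have hneζ : eqpart ζ ≠ 0 := by
    rwa [← norm_ne_zero_iff, hnorm, norm_ne_zero_iff]
  have hphi : eqpart (phi t (ydir ζ)) = (Real.sin t * ‖eqpart ξ‖⁻¹) • eqpart ζ := by
    rw [eqpart_phi, ydir_val hneζ, hnorm, smul_smul]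
  rw [eqpart_rot_eq_smul hη hphi, rot_rot_inv, eqpart_phi, ydir_val hne, smul_smul]

end Axis

section PoleFixingOrFlipping

variable {m : ℕ} {η : SOg (m + 2)}

lemma rot_spole_of_rot_npole (hN : rot η (npole (m + 1)) = npole (m + 1)) :
    rot η (spole (m + 1)) = spole (m + 1) :=
  Subtype.ext (by rw [rot_val_of_val_eq_neg η spole_val, hN, spole_val])

lemma rot_spole_of_rot_npole_eq_spole (hN : rot η (npole (m + 1)) = spole (m + 1)) :
    rot η (spole (m + 1)) = npole (m + 1) :=
  Subtype.ext (by rw [rot_val_of_val_eq_neg η spole_val, hN, spole_val, neg_neg])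

lemma rot_phi_ydir_rot_inv (hN : rot η (npole (m + 1)) = npole (m + 1))
    {ξ : Sph (m + 2)} (hne : eqpart ξ ≠ 0) (t : ℝ) :
    rot η (phi t (ydir (rot η⁻¹ ξ))) = phi t (ydir ξ) := by
  have hη : (rot η (npole (m + 1))).1 = (1 : ℝ) • (npole (m + 1)).1 := by rw [hN, one_smul]
  refine Sph.ext_eqpart_last (eqpart_rot_phi_ydir_rot_inv hη (one_mul 1) hne t) ?_
  rw [rot_apply_last hη (one_mul 1), one_mul, phi_apply_last, phi_apply_last]

lemma rot_phi_ydir_rot_inv_of_rot_npole_eq_spole (hN : rot η (npole (m + 1)) = spole (m + 1))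
    {ξ : Sph (m + 2)} (hne : eqpart ξ ≠ 0) (t : ℝ) :
    rot η (phi t (ydir (rot η⁻¹ ξ))) = reflSph (phi t (ydir (reflSph ξ))) := by
  have hη : (rot η (npole (m + 1))).1 = (-1 : ℝ) • (npole (m + 1)).1 := by
    rw [hN, spole_val, neg_one_smul]
  have hε : (-1 : ℝ) * -1 = 1 := by norm_num
  refine Sph.ext_eqpart_last ?_ ?_
  · rw [eqpart_rot_phi_ydir_rot_inv hη hε hne, eqpart_reflSph, ydir_reflSph]
  · rw [rot_apply_last hη hε, reflSph_apply_last, neg_one_mul, phi_apply_last, phi_apply_last]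

end PoleFixingOrFlipping

section Latitudinal

variable {m : ℕ}

lemma merid_loPt (g : C(Sph (m + 2), ℝ)) (y : Sph (m + 1)) : merid g y loPt = g (npole (m + 1)) :=
  congrArg g (phi_zero y)

lemma merid_hiPt (g : C(Sph (m + 2), ℝ)) (y : Sph (m + 1)) : merid g y hiPt = g (spole (m + 1)) :=
  congrArg g (phi_pi y)

lemma apply_loPt_hiPt_eq_of_eq {L : C(IccPi, ℝ) →L[ℝ] C(IccPi, ℝ)}
    (hL : ∀ g : C(IccPi, ℝ), g loPt = 0 → g hiPt = 0 → L g loPt = 0 ∧ L g hiPt = 0)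
    {g g' : C(IccPi, ℝ)} (h0 : g loPt = g' loPt) (hπ : g hiPt = g' hiPt) :
    L g loPt = L g' loPt ∧ L g hiPt = L g' hiPt := by
  have h := hL (g - g') (by simp [h0]) (by simp [hπ])
  simpa only [map_sub, ContinuousMap.sub_apply, sub_eq_zero] using h

lemma latOp_congr {L : C(IccPi, ℝ) →L[ℝ] C(IccPi, ℝ)}
    (hL : ∀ g : C(IccPi, ℝ), g loPt = 0 → g hiPt = 0 → L g loPt = 0 ∧ L g hiPt = 0)
    {g g' : C(Sph (m + 2), ℝ)} {ζ ζ' : Sph (m + 2)} (hlat : lat ζ = lat ζ')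
    (hN : g (npole (m + 1)) = g' (npole (m + 1))) (hS : g (spole (m + 1)) = g' (spole (m + 1)))
    (hmerid : eqpart ζ' ≠ 0 → merid g (ydir ζ) = merid g' (ydir ζ')) :
    latOp L g ζ = latOp L g' ζ' := by
  have hpt : (⟨lat ζ, lat_mem_Icc ζ⟩ : IccPi) = ⟨lat ζ', lat_mem_Icc ζ'⟩ := Subtype.ext hlat
  rw [latOp, latOp, hpt]
  by_cases hne : eqpart ζ' = 0
  · obtain ⟨h0, hπ⟩ := apply_loPt_hiPt_eq_of_eq hL (g := merid g (ydir ζ))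
      (g' := merid g' (ydir ζ')) (by rw [merid_loPt, merid_loPt, hN])
      (by rw [merid_hiPt, merid_hiPt, hS])
    rcases lat_eq_zero_or_eq_pi_of_eqpart_eq_zero hne with hlat' | hlat'
    · rwa [show (⟨lat ζ', lat_mem_Icc ζ'⟩ : IccPi) = loPt from Subtype.ext hlat']
    · rwa [show (⟨lat ζ', lat_mem_Icc ζ'⟩ : IccPi) = hiPt from Subtype.ext hlat']
  · rw [hmerid hne]

end Latitudinal

theorem conjugation_of_latitudinal_operator_by_rotation_general
    (m : ℕ)
    (L : C(IccPi, ℝ) →L[ℝ] C(IccPi, ℝ))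
    (hL : ∀ g : C(IccPi, ℝ), g loPt = 0 → g hiPt = 0 → L g loPt = 0 ∧ L g hiPt = 0)
    (η : SOg (m + 2)) :
    (rot η (npole (m + 1)) = npole (m + 1) →
      ∀ (f : C(Sph (m + 2), ℝ)) (ξ : Sph (m + 2)),
        latOp L (f.comp (rotCM η)) (rot η⁻¹ ξ) = latOp L f ξ)
    ∧ (rot η (npole (m + 1)) = spole (m + 1) →
      ∀ (f : C(Sph (m + 2), ℝ)) (ξ : Sph (m + 2)),
        latOp L (f.comp (rotCM η)) (rot η⁻¹ ξ)
          = latOp L (f.comp reflSphCM) (reflSph ξ)) := by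
  refine ⟨fun hN f ξ => latOp_congr hL ?_ ?_ ?_ fun hne => ?_,
    fun hN f ξ => latOp_congr hL ?_ ?_ ?_ fun hne => ?_⟩
  · have hη : (rot η (npole (m + 1))).1 = (1 : ℝ) • (npole (m + 1)).1 := by rw [hN, one_smul]
    rw [lat, lat, rot_inv_apply_last hη, one_mul]
  · exact congrArg f hN
  · exact congrArg f (rot_spole_of_rot_npole hN)
  · ext s
    exact congrArg f (rot_phi_ydir_rot_inv hN hne s.1)
  · have hη : (rot η (npole (m + 1))).1 = (-1 : ℝ) • (npole (m + 1)).1 := by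
      rw [hN, spole_val, neg_one_smul]
    rw [lat, lat, rot_inv_apply_last hη, reflSph_apply_last, neg_one_mul]
  · exact congrArg f (hN.trans reflSph_npole.symm)
  · exact congrArg f ((rot_spole_of_rot_npole_eq_spole hN).trans reflSph_spole.symm)
  · ext s
    rw [eqpart_reflSph] at hne
    exact congrArg f (rot_phi_ydir_rot_inv_of_rot_npole_eq_spole hN hne s.1)

/-- `k = m + 1 ≥ 2`: conjugation of a latitudinal operator `L^#` by a rotation
`η ∈ SO(k+1)` fixing (resp. flipping) the poles gives `L^#` (resp. `ρ^# ∘ L^# ∘ ρ^#`). -/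
theorem conjugation_of_latitudinal_operator_by_rotation
    (m : ℕ) (hm : 1 ≤ m)
    (L : C(IccPi, ℝ) →L[ℝ] C(IccPi, ℝ))
    (hL : ∀ g : C(IccPi, ℝ), g loPt = 0 → g hiPt = 0 → L g loPt = 0 ∧ L g hiPt = 0)
    (η : SOg (m + 2)) :
    (rot η (npole (m + 1)) = npole (m + 1) →
      ∀ (f : C(Sph (m + 2), ℝ)) (ξ : Sph (m + 2)),
        latOp L (f.comp (rotCM η)) (rot η⁻¹ ξ) = latOp L f ξ)
    ∧ (rot η (npole (m + 1)) = spole (m + 1) →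
      ∀ (f : C(Sph (m + 2), ℝ)) (ξ : Sph (m + 2)),
        latOp L (f.comp (rotCM η)) (rot η⁻¹ ξ)
          = latOp L (f.comp reflSphCM) (reflSph ξ)) :=
  conjugation_of_latitudinal_operator_by_rotation_general m L hL η

end
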